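/- arXiv:1304.1770 — 6 statements merged into one kernel-verified Lean document; each statement's English description precedes it below -/
import Mathlib

section
/- Let G and H be groups and let f₁, f₂ : H → G be group homomorphisms, defining an action of H on G by h ∗ g = f₁(h) · g · f₂(h)⁻¹. This action is effectively free (i.e., whenever some h ∈ H fixes some point g ∈ G, then h fixes every point of G) if and only if for every h ∈ H, if f₁(h) is conjugate to f₂(h) in G, then f₁(h) = f₂(h) and f₁(h) lies in the center of G. -/
/-!
An element `h` fixes `g` exactly when `g⁻¹` conjugates `f₁ h` to `f₂ h`, so `h` has a fixed
point iff `f₁ h` and `f₂ h` are conjugate. Fixing `1` forces `f₁ h = f₂ h`, after which fixing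
every `g` says that `f₁ h` commutes with every `g`.
-/

section BiquotientFixedPoints

variable {G : Type*} [Group G]

theorem mul_mul_inv_eq_self_iff {a b g : G} : a * g * b⁻¹ = g ↔ g⁻¹ * a * g = b := by
  rw [mul_inv_eq_iff_eq_mul, mul_assoc, inv_mul_eq_iff_eq_mul]

theorem exists_mul_mul_inv_eq_self_iff {a b : G} :
    (∃ g : G, a * g * b⁻¹ = g) ↔ ∃ u : G, u * a * u⁻¹ = b := by
  simp only [mul_mul_inv_eq_self_iff]
  exact (Equiv.inv G).exists_congr fun g => by simp

theorem forall_mul_mul_inv_eq_self_iff {a b : G} :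
    (∀ g : G, a * g * b⁻¹ = g) ↔ a = b ∧ a ∈ Subgroup.center G := by
  simp only [mul_mul_inv_eq_self_iff, Subgroup.mem_center_iff]
  constructor
  · intro hfix
    have hab : a = b := by simpa using hfix 1
    subst hab
    exact ⟨rfl, fun g => mul_inv_eq_iff_eq_mul.mp (by simpa using hfix g⁻¹)⟩
  · rintro ⟨rfl, hcomm⟩ g
    rw [mul_assoc, ← hcomm g, inv_mul_cancel_left]

end BiquotientFixedPoints

/-- The biquotient action of `H` on `G` induced by `f₁ f₂ : H →* G`,
namely `h ∗ g = f₁ h * g * (f₂ h)⁻¹`, is effectively free (any element fixing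
some point fixes every point) iff whenever `f₁ h` is conjugate to `f₂ h` in `G`,
we have `f₁ h = f₂ h` and this element is central. -/
theorem biquotient_effectively_free_iff {G H : Type*} [Group G] [Group H]
    (f₁ f₂ : H →* G) :
    (∀ h : H, (∃ g : G, f₁ h * g * (f₂ h)⁻¹ = g) → ∀ g : G, f₁ h * g * (f₂ h)⁻¹ = g) ↔
      (∀ h : H, (∃ u : G, u * f₁ h * u⁻¹ = f₂ h) →
        f₁ h = f₂ h ∧ f₁ h ∈ Subgroup.center G) :=
  forall_congr' fun _ => imp_congr exists_mul_mul_inv_eq_self_iff forall_mul_mul_inv_eq_self_iff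
end

section
/- Let ν, α, β, γ, δ, κ be integers with gcd(ν, α, γ) = 1 and gcd(κ, β, δ) = 1. Consider the T² = S¹ × S¹ action on S³ × S³ given by (z, w) ∗ ((p₁, q₁), (p₂, q₂)) = ((z^ν p₁, z^α w^β q₁), (w^κ p₂, z^γ w^δ q₂)). If this action is effectively free, then |ν| = 1 and |κ| = 1. -/
/-!
Any element `z` of the circle with `z ^ ν = 1` acts trivially on the `p₁`-coordinate, so the
point `((1, 0), (1, 0))` is fixed by `(z, 1)`; effective freeness forces `(z, 1)` to fix
`((0, 1), (0, 1))` as well, i.e. `z ^ α = z ^ γ = 1`. As `gcd(ν, α, γ) = 1`, this makes `z = 1`.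
But when `|ν| ≠ 1` the circle contains a nontrivial `ν`-th root of unity. The same argument
with `(1, w)` handles `κ`.
-/

/-- The unit 3-sphere `S³ = {(p, q) ∈ ℂ² : |p|² + |q|² = 1}`. -/
def Sphere3 : Set (ℂ × ℂ) := {p | ‖p.1‖ ^ 2 + ‖p.2‖ ^ 2 = 1}

lemma eq_one_of_zpow_eq_one_of_gcd_eq_one {G : Type*} [Group G] {x : G} {a b c : ℤ}
    (h : Int.gcd a (Int.gcd b c) = 1) (ha : x ^ a = 1) (hb : x ^ b = 1) (hc : x ^ c = 1) :
    x = 1 := by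
  rw [← orderOf_dvd_iff_zpow_eq_one] at ha hb hc
  have : orderOf x ∣ Int.gcd a (Int.gcd b c) := Int.dvd_gcd ha (Int.dvd_coe_gcd hb hc)
  rwa [h, Nat.dvd_one, orderOf_eq_one_iff] at this

lemma Circle.exists_ne_one_zpow_eq_one {n : ℤ} (hn : n.natAbs ≠ 1) :
    ∃ ζ : Circle, ζ ≠ 1 ∧ ζ ^ n = 1 := by
  obtain ⟨m, hm, hmn⟩ : ∃ m : ℕ, 1 < m ∧ (m : ℤ) ∣ n := by
    rcases eq_or_ne n 0 with rfl | hn0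
    · exact ⟨2, one_lt_two, dvd_zero _⟩
    · exact ⟨n.natAbs, by omega, Int.natAbs_dvd.mpr dvd_rfl⟩
  have : NeZero m := ⟨by omega⟩
  obtain ⟨ζ, hζ⟩ := HasEnoughRootsOfUnity.exists_primitiveRoot Circle m
  exact ⟨ζ, hζ.ne_one hm, (hζ.zpow_eq_one_iff_dvd n).mpr hmn⟩

lemma Circle.natAbs_eq_one_of_zpow_eq_one_imp {n a b : ℤ} (h : Int.gcd n (Int.gcd a b) = 1)
    (himp : ∀ z : Circle, z ^ n = 1 → z ^ a = 1 ∧ z ^ b = 1) : n.natAbs = 1 := by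
  by_contra hn
  obtain ⟨z, hz1, hzn⟩ := Circle.exists_ne_one_zpow_eq_one hn
  obtain ⟨hza, hzb⟩ := himp z hzn
  exact hz1 (eq_one_of_zpow_eq_one_of_gcd_eq_one h hzn hza hzb)

/-- If the `T²` action on `S³ × S³` given by
`(z, w) ∗ ((p₁, q₁), (p₂, q₂)) = ((z^ν p₁, z^α w^β q₁), (w^κ p₂, z^γ w^δ q₂))`,
with `gcd(ν, α, γ) = gcd(κ, β, δ) = 1`, is effectively free, then `|ν| = |κ| = 1`. -/
theorem effectively_free_torus_action_nu_kappa_one (ν α β γ δ κ : ℤ)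
    (h1 : Int.gcd ν (Int.gcd α γ : ℤ) = 1) (h2 : Int.gcd κ (Int.gcd β δ : ℤ) = 1)
    (hfree : ∀ z w : Circle,
      (∃ p₁ q₁ p₂ q₂ : ℂ, (p₁, q₁) ∈ Sphere3 ∧ (p₂, q₂) ∈ Sphere3 ∧
        ((z ^ ν : Circle) : ℂ) * p₁ = p₁ ∧ ((z ^ α * w ^ β : Circle) : ℂ) * q₁ = q₁ ∧
        ((w ^ κ : Circle) : ℂ) * p₂ = p₂ ∧ ((z ^ γ * w ^ δ : Circle) : ℂ) * q₂ = q₂) →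
      (∀ p₁ q₁ p₂ q₂ : ℂ, (p₁, q₁) ∈ Sphere3 → (p₂, q₂) ∈ Sphere3 →
        ((z ^ ν : Circle) : ℂ) * p₁ = p₁ ∧ ((z ^ α * w ^ β : Circle) : ℂ) * q₁ = q₁ ∧
        ((w ^ κ : Circle) : ℂ) * p₂ = p₂ ∧ ((z ^ γ * w ^ δ : Circle) : ℂ) * q₂ = q₂)) :
    ν.natAbs = 1 ∧ κ.natAbs = 1 := by
  have h10 : ((1 : ℂ), (0 : ℂ)) ∈ Sphere3 := by simp [Sphere3]
  have h01 : ((0 : ℂ), (1 : ℂ)) ∈ Sphere3 := by simp [Sphere3]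
  constructor
  · refine Circle.natAbs_eq_one_of_zpow_eq_one_imp h1 fun z hz ↦ ?_
    have := hfree z 1 ⟨1, 0, 1, 0, h10, h10, by simp [hz], by simp, by simp, by simp⟩
      0 1 0 1 h01 h01
    simpa [-Circle.coe_zpow, Circle.coe_eq_one] using this
  · refine Circle.natAbs_eq_one_of_zpow_eq_one_imp h2 fun w hw ↦ ?_
    have := hfree 1 w ⟨1, 0, 1, 0, h10, h10, by simp, by simp, by simp [hw], by simp⟩
      0 1 0 1 h01 h01
    simpa [-Circle.coe_zpow, Circle.coe_eq_one] using this
end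

section
/- Let α, β, δ be nonnegative integers and γ an arbitrary integer. The T² = S¹ × S¹ action on S³ × S³ given by (z, w) ∗ ((p₁, q₁), (p₂, q₂)) = ((z p₁, z^α w^β q₁), (w p₂, z^γ w^δ q₂)) is free if and only if α = δ = 1 and |1 − βγ| = 1. -/
theorem exists_mem_sphere3_mul_eq_self_iff (a b : ℂ) :
    (∃ p q : ℂ, (p, q) ∈ Sphere3 ∧ a * p = p ∧ b * q = q) ↔ a = 1 ∨ b = 1 := by
  constructor
  · rintro ⟨p, q, hpq, hp, hq⟩
    rw [mul_left_eq_self₀] at hp hq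
    rcases hp with ha | rfl
    · exact Or.inl ha
    rcases hq with hb | rfl
    · exact Or.inr hb
    simp [Sphere3] at hpq
  · rintro (rfl | rfl)
    · exact ⟨1, 0, by simp [Sphere3], one_mul 1, mul_zero b⟩
    · exact ⟨0, 1, by simp [Sphere3], mul_zero a, one_mul 1⟩

theorem exists_mem_sphere3_prod_fixed_iff (a b c d : ℂ) :
    (∃ p₁ q₁ p₂ q₂ : ℂ, (p₁, q₁) ∈ Sphere3 ∧ (p₂, q₂) ∈ Sphere3 ∧
        a * p₁ = p₁ ∧ b * q₁ = q₁ ∧ c * p₂ = p₂ ∧ d * q₂ = q₂) ↔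
      (a = 1 ∨ b = 1) ∧ (c = 1 ∨ d = 1) := by
  rw [← exists_mem_sphere3_mul_eq_self_iff, ← exists_mem_sphere3_mul_eq_self_iff]
  constructor
  · rintro ⟨p₁, q₁, p₂, q₂, h₁, h₂, ha, hb, hc, hd⟩
    exact ⟨⟨p₁, q₁, h₁, ha, hb⟩, ⟨p₂, q₂, h₂, hc, hd⟩⟩
  · rintro ⟨⟨p₁, q₁, h₁, ha, hb⟩, ⟨p₂, q₂, h₂, hc, hd⟩⟩
    exact ⟨p₁, q₁, p₂, q₂, h₁, h₂, ha, hb, hc, hd⟩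

theorem Circle.exists_ne_one_pow_eq_one {n : ℕ} (hn : n ≠ 1) : ∃ z : Circle, z ≠ 1 ∧ z ^ n = 1 := by
  obtain ⟨k, hk, hkn⟩ : ∃ k : ℕ, 1 < k ∧ k ∣ n := by
    rcases eq_or_ne n 0 with rfl | hn₀
    · exact ⟨2, one_lt_two, dvd_zero 2⟩
    · exact ⟨n, by omega, dvd_rfl⟩
  have : NeZero k := ⟨by omega⟩
  obtain ⟨ζ, hζ⟩ := HasEnoughRootsOfUnity.exists_primitiveRoot Circle k
  exact ⟨ζ, hζ.ne_one hk, (hζ.pow_eq_one_iff_dvd n).2 hkn⟩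

theorem Circle.exists_ne_one_zpow_eq_one_s10 {m : ℤ} (hm : m.natAbs ≠ 1) :
    ∃ z : Circle, z ≠ 1 ∧ z ^ m = 1 := by
  obtain ⟨z, hz, hzm⟩ := Circle.exists_ne_one_pow_eq_one hm
  exact ⟨z, hz, pow_natAbs_eq_one.1 hzm⟩

theorem eq_one_and_eq_one_of_natAbs_one_sub_mul_eq_one {G : Type*} [Group G] {β : ℕ} {γ : ℤ}
    (hβγ : (1 - (β : ℤ) * γ).natAbs = 1) {z w : G}
    (h₁ : z = 1 ∨ z * w ^ β = 1) (h₂ : w = 1 ∨ z ^ γ * w = 1) : z = 1 ∧ w = 1 := by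
  have hw : w = 1 := by
    rcases h₂ with hw | hzw
    · exact hw
    rcases h₁ with rfl | hz
    · simpa using hzw
    have hz : z = (w ^ β)⁻¹ := eq_inv_of_mul_eq_one_left hz
    have hw : w ^ (1 - (β : ℤ) * γ) = 1 := by
      rw [← hzw, hz]
      group
    rwa [← pow_natAbs_eq_one, hβγ, pow_one] at hw
  subst hw
  simpa using h₁

/-- For nonnegative integers `α, β, δ` and an integer `γ`, the `T²` action on
`S³ × S³` given by `(z, w) ∗ ((p₁, q₁), (p₂, q₂)) = ((z p₁, z^α w^β q₁), (w p₂, z^γ w^δ q₂))`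
is free iff `α = δ = 1` and `|1 − βγ| = 1`. -/
theorem torus_action_free_iff (α β δ : ℕ) (γ : ℤ) :
    (∀ z w : Circle,
      (∃ p₁ q₁ p₂ q₂ : ℂ, (p₁, q₁) ∈ Sphere3 ∧ (p₂, q₂) ∈ Sphere3 ∧
        (z : ℂ) * p₁ = p₁ ∧ ((z ^ α * w ^ β : Circle) : ℂ) * q₁ = q₁ ∧
        (w : ℂ) * p₂ = p₂ ∧ ((z ^ γ * w ^ δ : Circle) : ℂ) * q₂ = q₂) →
      z = 1 ∧ w = 1) ↔
    (α = 1 ∧ δ = 1 ∧ (1 - (β : ℤ) * γ).natAbs = 1) := by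
  simp only [exists_mem_sphere3_prod_fixed_iff, Circle.coe_eq_one]
  constructor
  · intro hfree
    have hα : α = 1 := by
      by_contra hα
      obtain ⟨z, hz, hzα⟩ := Circle.exists_ne_one_pow_eq_one hα
      exact hz (hfree z 1 ⟨Or.inr (by simp [hzα]), Or.inl rfl⟩).1
    have hδ : δ = 1 := by
      by_contra hδ
      obtain ⟨w, hw, hwδ⟩ := Circle.exists_ne_one_pow_eq_one hδ
      exact hw (hfree 1 w ⟨Or.inl rfl, Or.inr (by simp [hwδ])⟩).2
    subst hα hδ
    refine ⟨rfl, rfl, ?_⟩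
    by_contra hβγ
    obtain ⟨w, hw, hwm⟩ := Circle.exists_ne_one_zpow_eq_one_s10 hβγ
    refine hw (hfree (w ^ (-(β : ℤ))) w ⟨Or.inr ?_, Or.inr ?_⟩).2
    · group
    · rw [← hwm]
      group
  · rintro ⟨rfl, rfl, hβγ⟩ z w h
    simp only [pow_one] at h
    exact eq_one_and_eq_one_of_natAbs_one_sub_mul_eq_one hβγ h.1 h.2
end

section
/- Let a, b, c, d be integers and consider the S¹ action on SU(2) × SU(2) given by z ∗ (A, B) = (D(z^a) · A · D(z^c)⁻¹, D(z^b) · B · D(z^d)⁻¹). An element z ∈ S¹ fixes some point of SU(2) × SU(2) under this action if and only if there exist signs ε, ε' ∈ {1, −1} such that z^(a + εc) = 1 and z^(b + ε'd) = 1. -/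
/-!
`D(u) A D(v)⁻¹ = A` says `D(u) A = A D(v)`, i.e. `(u - v) A₀₀ = 0` and `(u - v̄) A₀₁ = 0`.
An invertible `A` has a nonzero entry in its first row, so `u = v` or `u = v̄ = v⁻¹`;
conversely `1` and `!![0, 1; -1, 0]` are points of `SU(2)` fixed in these two cases.
With `u = z^a`, `v = z^c` the two cases are `z^(a - c) = 1` and `z^(a + c) = 1`.
-/

open Matrix ComplexConjugate

noncomputable def DMat (u : Circle) : Matrix (Fin 2) (Fin 2) ℂ :=
  Matrix.diagonal ![(u : ℂ), (starRingEnd ℂ) (u : ℂ)]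

lemma DMat_mul (u v : Circle) : DMat u * DMat v = DMat (u * v) := by
  simp only [DMat, diagonal_mul_diagonal]
  congr 1
  ext i
  fin_cases i <;> simp

lemma DMat_one : DMat 1 = 1 := by
  rw [DMat, ← diagonal_one]
  congr 1
  ext i
  fin_cases i <;> simp

lemma DMat_inv (u : Circle) : (DMat u)⁻¹ = DMat u⁻¹ :=
  inv_eq_right_inv (by rw [DMat_mul, mul_inv_cancel, DMat_one])

lemma DMat_mul_mul_DMat_inv_eq_iff (u v : Circle) (A : Matrix (Fin 2) (Fin 2) ℂ) :
    DMat u * A * (DMat v)⁻¹ = A ↔ DMat u * A = A * DMat v := by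
  rw [DMat_inv]
  constructor
  · intro h
    conv_rhs => rw [← h]
    rw [Matrix.mul_assoc _ (DMat v⁻¹), DMat_mul, inv_mul_cancel, DMat_one, Matrix.mul_one]
  · intro h
    rw [h, Matrix.mul_assoc, DMat_mul, mul_inv_cancel, DMat_one, Matrix.mul_one]

lemma eq_or_eq_inv_of_DMat_mul_eq_mul_DMat {u v : Circle} {A : Matrix (Fin 2) (Fin 2) ℂ}
    (hA : A.det ≠ 0) (h : DMat u * A = A * DMat v) : u = v ∨ u = v⁻¹ := by
  have first_row (j : Fin 2) : ((u : ℂ) - ![(v : ℂ), conj (v : ℂ)] j) * A 0 j = 0 := by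
    have hj := congrFun₂ h 0 j
    simp only [DMat, diagonal_mul, mul_diagonal, Matrix.cons_val_zero] at hj
    linear_combination hj
  by_cases h00 : A 0 0 = 0
  · have h01 : A 0 1 ≠ 0 := by
      intro h01
      apply hA
      rw [det_fin_two, h00, h01]
      ring
    right
    ext
    rw [Circle.coe_inv_eq_conj]
    simpa [sub_eq_zero, h01] using first_row 1
  · left
    ext
    simpa [sub_eq_zero, h00] using first_row 0

lemma mem_specialUnitaryGroup_rotation :
    !![0, 1; -1, 0] ∈ specialUnitaryGroup (Fin 2) ℂ := by
  rw [mem_specialUnitaryGroup_iff, mem_unitaryGroup_iff]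
  refine ⟨?_, by simp [det_fin_two_of]⟩
  ext i j
  fin_cases i <;> fin_cases j <;> simp [mul_apply, Fin.sum_univ_two, one_apply]

lemma DMat_mul_rotation (u : Circle) :
    DMat u * !![0, 1; -1, 0] = !![0, 1; -1, 0] * DMat u⁻¹ := by
  ext i j
  fin_cases i <;> fin_cases j <;> simp [DMat, -Circle.coe_inv, Circle.coe_inv_eq_conj]

theorem exists_specialUnitary_DMat_conj_eq_self_iff (u v : Circle) :
    (∃ A ∈ specialUnitaryGroup (Fin 2) ℂ, DMat u * A * (DMat v)⁻¹ = A) ↔ u = v ∨ u = v⁻¹ := by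
  simp only [DMat_mul_mul_DMat_inv_eq_iff]
  constructor
  · rintro ⟨A, hA, h⟩
    exact eq_or_eq_inv_of_DMat_mul_eq_mul_DMat (by simp [(mem_specialUnitaryGroup_iff.mp hA).2]) h
  · rintro (rfl | rfl)
    · exact ⟨1, one_mem _, by rw [Matrix.mul_one, Matrix.one_mul]⟩
    · exact ⟨_, mem_specialUnitaryGroup_rotation, by rw [DMat_mul_rotation, inv_inv]⟩

lemma zpow_eq_or_eq_inv_iff {G : Type*} [Group G] (z : G) (a c : ℤ) :
    (z ^ a = z ^ c ∨ z ^ a = (z ^ c)⁻¹) ↔ ∃ ε : ℤ, (ε = 1 ∨ ε = -1) ∧ z ^ (a + ε * c) = 1 := by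
  simp only [or_and_right, exists_or, exists_eq_left]
  rw [one_mul, _root_.zpow_add, mul_eq_one_iff_eq_inv, neg_one_mul, ← sub_eq_add_neg, _root_.zpow_sub,
    mul_inv_eq_one, or_comm]

/-- Under the `S¹` action on `SU(2) × SU(2)` given by
`z ∗ (A, B) = (D(z^a) A D(z^c)⁻¹, D(z^b) B D(z^d)⁻¹)`, an element `z` fixes some
point iff there are signs `ε, ε' ∈ {1, −1}` with `z^(a+εc) = 1` and `z^(b+ε'd) = 1`. -/
theorem circle_action_fixes_point_iff (a b c d : ℤ) (z : Circle) :
    (∃ A B : Matrix (Fin 2) (Fin 2) ℂ,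
      A ∈ Matrix.specialUnitaryGroup (Fin 2) ℂ ∧ B ∈ Matrix.specialUnitaryGroup (Fin 2) ℂ ∧
      DMat (z ^ a) * A * (DMat (z ^ c))⁻¹ = A ∧ DMat (z ^ b) * B * (DMat (z ^ d))⁻¹ = B) ↔
    (∃ ε ε' : ℤ, (ε = 1 ∨ ε = -1) ∧ (ε' = 1 ∨ ε' = -1) ∧
      z ^ (a + ε * c) = 1 ∧ z ^ (b + ε' * d) = 1) := by
  have key (x y : ℤ) := (exists_specialUnitary_DMat_conj_eq_self_iff (z ^ x) (z ^ y)).trans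
    (zpow_eq_or_eq_inv_iff z x y)
  constructor
  · rintro ⟨A, B, hA, hB, hAz, hBz⟩
    obtain ⟨ε, hε, h⟩ := (key a c).1 ⟨A, hA, hAz⟩
    obtain ⟨ε', hε', h'⟩ := (key b d).1 ⟨B, hB, hBz⟩
    exact ⟨ε, ε', hε, hε', h, h'⟩
  · rintro ⟨ε, ε', hε, hε', h, h'⟩
    obtain ⟨A, hA, hAz⟩ := (key a c).2 ⟨ε, hε, h⟩
    obtain ⟨B, hB, hBz⟩ := (key b d).2 ⟨ε', hε', h'⟩
    exact ⟨A, B, hA, hB, hAz, hBz⟩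
end

section
/- Let a, b, c, d be integers. Then: (i) gcd(a + εc, b + ε'd) = 1 for every choice of signs ε, ε' ∈ {1, −1} if and only if gcd(a² − c², b² − d²) = 1; and (ii) gcd(a + εc, b + ε'd) = 2 for every choice of signs ε, ε' ∈ {1, −1} if and only if gcd(a² − c², b² − d²) = 4. -/
/-!
Write `x = a + c`, `y = a - c`, `u = b + d`, `v = b - d`, so that `a² - c² = x y` and
`b² - d² = u v`. The four sign choices give the four gcds of `x` or `y` with `u` or `v`, and
`x y` is coprime to `u v` exactly when each of `x, y` is coprime to each of `u, v`. For (ii),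
`x ≡ y` and `u ≡ v` mod 2, so either side forces all four to be even; halving them
multiplies `gcd(x y, u v)` by `1/4` and each `gcd(x, u)` by `1/2`, which reduces (ii) to (i).
-/

theorem Int.gcd_mul_mul_eq_one_iff (x y u v : ℤ) :
    Int.gcd (x * y) (u * v) = 1 ↔
      Int.gcd x u = 1 ∧ Int.gcd x v = 1 ∧ Int.gcd y u = 1 ∧ Int.gcd y v = 1 := by
  simp only [← Int.isCoprime_iff_gcd_eq_one]
  rw [IsCoprime.mul_left_iff, IsCoprime.mul_right_iff, IsCoprime.mul_right_iff, and_assoc]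

theorem Int.gcd_two_mul_mul_two_mul_eq_four_iff (x y u v : ℤ) :
    Int.gcd (2 * x * (2 * y)) (2 * u * (2 * v)) = 4 ↔
      Int.gcd (2 * x) (2 * u) = 2 ∧ Int.gcd (2 * x) (2 * v) = 2 ∧
        Int.gcd (2 * y) (2 * u) = 2 ∧ Int.gcd (2 * y) (2 * v) = 2 := by
  have h4 : ∀ m n : ℤ, 2 * m * (2 * n) = 4 * (m * n) := fun m n => by ring
  simp only [h4, Int.gcd_mul_left]
  simpa using Int.gcd_mul_mul_eq_one_iff x y u v

theorem Int.gcd_mul_mul_eq_four_iff {x y u v : ℤ} (hxy : Even x ↔ Even y)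
    (huv : Even u ↔ Even v) :
    Int.gcd (x * y) (u * v) = 4 ↔
      Int.gcd x u = 2 ∧ Int.gcd x v = 2 ∧ Int.gcd y u = 2 ∧ Int.gcd y v = 2 := by
  by_cases hev : Even x ∧ Even u
  · simp only [even_iff_two_dvd] at hxy huv hev
    obtain ⟨⟨x, rfl⟩, ⟨u, rfl⟩⟩ := hev
    obtain ⟨y, rfl⟩ := hxy.mp (dvd_mul_right 2 x)
    obtain ⟨v, rfl⟩ := huv.mp (dvd_mul_right 2 u)
    exact Int.gcd_two_mul_mul_two_mul_eq_four_iff x y u v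
  · refine iff_of_false (fun h => hev ?_) (fun h => hev ?_)
    · have h2 : (2 : ℤ) ∣ Int.gcd (x * y) (u * v) := by rw [h]; norm_num
      have hprod : Even (x * y) ∧ Even (u * v) := by
        simp only [even_iff_two_dvd]
        exact ⟨h2.trans (Int.gcd_dvd_left _ _), h2.trans (Int.gcd_dvd_right _ _)⟩
      exact ⟨(Int.even_mul.mp hprod.1).elim id hxy.mpr,
        (Int.even_mul.mp hprod.2).elim id huv.mpr⟩
    · simp only [even_iff_two_dvd]
      exact ⟨by simpa [h.1] using Int.gcd_dvd_left x u,
        by simpa [h.1] using Int.gcd_dvd_right x u⟩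

theorem forall_signs_iff (P : ℤ → ℤ → Prop) (a b c d : ℤ) :
    (∀ ε ε' : ℤ, (ε = 1 ∨ ε = -1) → (ε' = 1 ∨ ε' = -1) → P (a + ε * c) (b + ε' * d)) ↔
      P (a + c) (b + d) ∧ P (a + c) (b - d) ∧ P (a - c) (b + d) ∧ P (a - c) (b - d) := by
  constructor
  · intro h
    refine ⟨?_, ?_, ?_, ?_⟩
    · simpa using h 1 1 (by simp) (by simp)
    · simpa [← sub_eq_add_neg] using h 1 (-1) (by simp) (by simp)
    · simpa [← sub_eq_add_neg] using h (-1) 1 (by simp) (by simp)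
    · simpa [← sub_eq_add_neg] using h (-1) (-1) (by simp) (by simp)
  · rintro ⟨hpp, hpm, hmp, hmm⟩ ε ε' (rfl | rfl) (rfl | rfl) <;> simpa [← sub_eq_add_neg]

theorem Int.even_add_iff_even_sub (m n : ℤ) : Even (m + n) ↔ Even (m - n) := by
  rw [Int.even_add, Int.even_sub]

/-- For integers `a, b, c, d`:
(i) `gcd(a + εc, b + ε'd) = 1` for all signs `ε, ε' ∈ {1, −1}` iff
`gcd(a² − c², b² − d²) = 1`; and
(ii) `gcd(a + εc, b + ε'd) = 2` for all signs iff `gcd(a² − c², b² − d²) = 4`. -/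
theorem gcd_signs_iff_gcd_squares (a b c d : ℤ) :
    ((∀ ε ε' : ℤ, (ε = 1 ∨ ε = -1) → (ε' = 1 ∨ ε' = -1) →
        Int.gcd (a + ε * c) (b + ε' * d) = 1) ↔
      Int.gcd (a ^ 2 - c ^ 2) (b ^ 2 - d ^ 2) = 1) ∧
    ((∀ ε ε' : ℤ, (ε = 1 ∨ ε = -1) → (ε' = 1 ∨ ε' = -1) →
        Int.gcd (a + ε * c) (b + ε' * d) = 2) ↔
      Int.gcd (a ^ 2 - c ^ 2) (b ^ 2 - d ^ 2) = 4) := by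
  rw [forall_signs_iff (fun m n => Int.gcd m n = 1), forall_signs_iff (fun m n => Int.gcd m n = 2),
    sq_sub_sq a c, sq_sub_sq b d]
  exact ⟨(Int.gcd_mul_mul_eq_one_iff _ _ _ _).symm,
    (Int.gcd_mul_mul_eq_four_iff (Int.even_add_iff_even_sub a c)
      (Int.even_add_iff_even_sub b d)).symm⟩
end

section
/- Let a, b, c, d be integers with gcd(a, b, c, d) = 1 and gcd(a + εc, b + ε'd) = 2 for every choice of signs ε, ε' ∈ {1, −1} (so a ± c and b ± d are even). Then the S¹ action on U(2) × U(2) given by z ∗ (A, B) = (diag(z^a, 1) · A · diag(z^((a+c)/2), z^((a−c)/2))⁻¹, diag(z^b, 1) · B · diag(z^((b+d)/2), z^((b−d)/2))⁻¹) is free: if some z ∈ S¹ fixes some point (A, B) ∈ U(2) × U(2), then z = 1. -/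
/-!
If `z` fixes `A`, then `diag(z^(p+q), 1) · A = A · diag(z^p, z^q)` with `p, q = (a ± c)/2`;
reading this off on a nonzero entry of the first column of the unitary `A` gives `z^p = 1` or
`z^q = 1`. Likewise `z` is killed by one of `(b ± d)/2`. The hypothesis `gcd = 2` makes each pair
of halves coprime, so the order of `z` is `1`.
-/

open Matrix

theorem Matrix.exists_ne_zero_of_mem_unitaryGroup {n α : Type*} [Fintype n] [DecidableEq n]
    [CommRing α] [StarRing α] [Nontrivial α] {A : Matrix n n α}
    (hA : A ∈ unitaryGroup n α) (j : n) : ∃ i, A i j ≠ 0 := by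
  by_contra! h
  simpa [mul_apply, h] using congr_fun₂ hA.1 j j

theorem eq_one_or_eq_one_of_diagonal_mul_eq_mul_diagonal {K : Type*} [Field K] {u v : K}
    (hu : u ≠ 0) {A : Matrix (Fin 2) (Fin 2) K} (hA : ∃ i, A i 0 ≠ 0)
    (h : diagonal ![u * v, 1] * A = A * diagonal ![u, v]) : u = 1 ∨ v = 1 := by
  rcases Fin.exists_fin_two.1 hA with h0 | h1
  · have h00 := congr_fun₂ h 0 0
    simp only [diagonal_mul, mul_diagonal, cons_val_zero] at h00
    exact .inr (mul_left_cancel₀ hu (mul_right_cancel₀ h0 (by rw [h00, mul_one, mul_comm])))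
  · have h10 := congr_fun₂ h 1 0
    simp only [diagonal_mul, mul_diagonal, cons_val_one, cons_val_zero, one_mul] at h10
    exact .inl (mul_left_cancel₀ h1 ((mul_one _).trans h10)).symm

theorem Circle.eq_one_or_eq_one_of_diagonal_conj_eq {u v : Circle}
    {A : Matrix (Fin 2) (Fin 2) ℂ} (hA : A ∈ unitaryGroup (Fin 2) ℂ)
    (h : diagonal ![((u * v : Circle) : ℂ), 1] * A * (diagonal ![(u : ℂ), v])⁻¹ = A) :
    u = 1 ∨ v = 1 := by
  have : Invertible (diagonal ![(u : ℂ), v]) :=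
    invertibleOfIsUnitDet _ (by simp [det_diagonal, Fin.prod_univ_two])
  rw [mul_inv_eq_iff_eq_mul_of_invertible, Circle.coe_mul] at h
  simpa only [Circle.coe_eq_one] using eq_one_or_eq_one_of_diagonal_mul_eq_mul_diagonal
    (Circle.coe_ne_zero u) (exists_ne_zero_of_mem_unitaryGroup hA 0) h

theorem eq_one_of_zpow_eq_one_of_gcd_eq_one_s17 {G : Type*} [Group G] {x : G} {m n : ℤ}
    (hm : x ^ m = 1) (hn : x ^ n = 1) (h : Int.gcd m n = 1) : x = 1 := by
  rw [← orderOf_eq_one_iff, ← Nat.dvd_one, ← h]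
  exact Int.dvd_gcd (orderOf_dvd_iff_zpow_eq_one.2 hm) (orderOf_dvd_iff_zpow_eq_one.2 hn)

theorem Int.two_dvd_left_of_gcd_eq_two {m n : ℤ} (h : Int.gcd m n = 2) : 2 ∣ m := by
  exact_mod_cast h ▸ Int.gcd_dvd_left m n

theorem Int.two_dvd_right_of_gcd_eq_two {m n : ℤ} (h : Int.gcd m n = 2) : 2 ∣ n := by
  exact_mod_cast h ▸ Int.gcd_dvd_right m n

theorem Int.gcd_div_two_eq_one {m n : ℤ} (h : Int.gcd m n = 2) : Int.gcd (m / 2) (n / 2) = 1 := by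
  rw [Int.gcd_div (two_dvd_left_of_gcd_eq_two h) (two_dvd_right_of_gcd_eq_two h), h]
  rfl

theorem Circle.exists_sign_zpow_div_two_eq_one_of_diagonal_conj_eq {z : Circle} {a c : ℤ}
    (hac : 2 ∣ a + c) {A : Matrix (Fin 2) (Fin 2) ℂ} (hA : A ∈ unitaryGroup (Fin 2) ℂ)
    (h : diagonal ![((z ^ a : Circle) : ℂ), 1] * A *
      (diagonal ![((z ^ ((a + c) / 2) : Circle) : ℂ), ((z ^ ((a - c) / 2) : Circle) : ℂ)])⁻¹ = A) :
    ∃ ε : ℤ, (ε = 1 ∨ ε = -1) ∧ z ^ ((a + ε * c) / 2) = 1 := by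
  have hsplit : z ^ a = z ^ ((a + c) / 2) * z ^ ((a - c) / 2) := by
    rw [← _root_.zpow_add]
    congr 1
    omega
  rw [hsplit] at h
  rcases eq_one_or_eq_one_of_diagonal_conj_eq hA h with hplus | hminus
  · exact ⟨1, .inl rfl, by simpa using hplus⟩
  · exact ⟨-1, .inr rfl, by simpa [← sub_eq_add_neg] using hminus⟩

theorem circle_action_on_U2_free_general (a b c d : ℤ)
    (h2 : ∀ ε ε' : ℤ, (ε = 1 ∨ ε = -1) → (ε' = 1 ∨ ε' = -1) →
      Int.gcd (a + ε * c) (b + ε' * d) = 2) :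
    ∀ z : Circle, ∀ A B : Matrix (Fin 2) (Fin 2) ℂ,
      A ∈ Matrix.unitaryGroup (Fin 2) ℂ → B ∈ Matrix.unitaryGroup (Fin 2) ℂ →
      (Matrix.diagonal ![((z ^ a : Circle) : ℂ), 1] * A *
          (Matrix.diagonal ![((z ^ ((a + c) / 2) : Circle) : ℂ),
            ((z ^ ((a - c) / 2) : Circle) : ℂ)])⁻¹ = A ∧
        Matrix.diagonal ![((z ^ b : Circle) : ℂ), 1] * B *
          (Matrix.diagonal ![((z ^ ((b + d) / 2) : Circle) : ℂ),
            ((z ^ ((b - d) / 2) : Circle) : ℂ)])⁻¹ = B) →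
      z = 1 := by
  intro z A B hA hB ⟨hfA, hfB⟩
  have h₁₁ := h2 1 1 (.inl rfl) (.inl rfl)
  obtain ⟨ε, hε, hzA⟩ := Circle.exists_sign_zpow_div_two_eq_one_of_diagonal_conj_eq
    (by simpa using Int.two_dvd_left_of_gcd_eq_two h₁₁) hA hfA
  obtain ⟨ε', hε', hzB⟩ := Circle.exists_sign_zpow_div_two_eq_one_of_diagonal_conj_eq
    (by simpa using Int.two_dvd_right_of_gcd_eq_two h₁₁) hB hfB
  exact eq_one_of_zpow_eq_one_of_gcd_eq_one_s17 hzA hzB (Int.gcd_div_two_eq_one (h2 ε ε' hε hε'))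

/-- If `gcd(a, b, c, d) = 1` and `gcd(a + εc, b + ε'd) = 2` for every choice of
signs (so `a ± c` and `b ± d` are even), then the `S¹` action on `U(2) × U(2)`
given by
`z ∗ (A, B) = (diag(z^a, 1)·A·diag(z^((a+c)/2), z^((a−c)/2))⁻¹,
               diag(z^b, 1)·B·diag(z^((b+d)/2), z^((b−d)/2))⁻¹)`
is free: any `z` fixing some point is `1`. -/
theorem circle_action_on_U2_free (a b c d : ℤ)
    (hgcd : Int.gcd a (Int.gcd b (Int.gcd c d : ℤ) : ℤ) = 1)
    (h2 : ∀ ε ε' : ℤ, (ε = 1 ∨ ε = -1) → (ε' = 1 ∨ ε' = -1) →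
      Int.gcd (a + ε * c) (b + ε' * d) = 2) :
    ∀ z : Circle, ∀ A B : Matrix (Fin 2) (Fin 2) ℂ,
      A ∈ Matrix.unitaryGroup (Fin 2) ℂ → B ∈ Matrix.unitaryGroup (Fin 2) ℂ →
      (Matrix.diagonal ![((z ^ a : Circle) : ℂ), 1] * A *
          (Matrix.diagonal ![((z ^ ((a + c) / 2) : Circle) : ℂ),
            ((z ^ ((a - c) / 2) : Circle) : ℂ)])⁻¹ = A ∧
        Matrix.diagonal ![((z ^ b : Circle) : ℂ), 1] * B *
          (Matrix.diagonal ![((z ^ ((b + d) / 2) : Circle) : ℂ),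
            ((z ^ ((b - d) / 2) : Circle) : ℂ)])⁻¹ = B) →
      z = 1 :=
  circle_action_on_U2_free_general a b c d h2
end
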